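/- arXiv:1108.0718 — 3 statements merged into one kernel-verified Lean document; each statement's English description precedes it below -/
import Mathlib

section
/- Let W ⊆ GL(ℓ,ℂ) be an irreducible finite Coxeter group with basic invariants p₁,…,p_ℓ scaled so that det J = Δ, where J = (∂p_i/∂x_j) and Δ is the product of linear forms defining the reflecting hyperplanes. Since Δ² is W-invariant, there is a unique polynomial a ∈ ℂ[y₁,…,y_ℓ] with Δ² = a(p₁,…,p_ℓ); write ∂_{p_i}(Δ²) := (∂a/∂y_i)(p₁,…,p_ℓ) ∈ S. Let m^i_j denote the (i,j) entry of the adjugate matrix of Jᵗ. Then for all i, j ∈ {1,…,ℓ}: ∂_{p_i}(Δ²)·m^ℓ_j − ∂_{p_ℓ}(Δ²)·m^i_j lies in the principal ideal of S generated by Δ. -/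
open MvPolynomial Matrix

/-- Substitution action of a matrix on polynomials: `subAct ℓ g f = f(g · x)`,
i.e. the substitution `xᵢ ↦ ∑ⱼ gᵢⱼ xⱼ`.  A polynomial `f` is `W`-invariant for the
action `(w·f)(x) = f(w⁻¹x)` iff `subAct ℓ w f = f` for all `w ∈ W`. -/
noncomputable def subAct (ℓ : ℕ) (g : Matrix (Fin ℓ) (Fin ℓ) ℂ) :
    MvPolynomial (Fin ℓ) ℂ →ₐ[ℂ] MvPolynomial (Fin ℓ) ℂ :=
  aeval fun i => ∑ j, C (g i j) * X j

/-- `f` is invariant under every element of `W`. -/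
def IsInvariantPoly (ℓ : ℕ) (W : Subgroup (GL (Fin ℓ) ℂ)) (f : MvPolynomial (Fin ℓ) ℂ) : Prop :=
  ∀ w ∈ W, subAct ℓ (↑w : Matrix (Fin ℓ) (Fin ℓ) ℂ) f = f

/-- A reflection: an element of order 2 whose fixed-point space is a hyperplane. -/
def IsReflection (ℓ : ℕ) (w : GL (Fin ℓ) ℂ) : Prop :=
  w ≠ 1 ∧ w * w = 1 ∧
    Module.finrank ℂ (LinearMap.ker
      ((↑w : Matrix (Fin ℓ) (Fin ℓ) ℂ).mulVecLin
        - (LinearMap.id : (Fin ℓ → ℂ) →ₗ[ℂ] (Fin ℓ → ℂ)))) = ℓ - 1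

/-- A real orthogonal matrix inside `GL(ℓ,ℂ)`. -/
def IsRealOrthogonal (ℓ : ℕ) (A : Matrix (Fin ℓ) (Fin ℓ) ℂ) : Prop :=
  (∀ i j, (A i j).im = 0) ∧ Aᵀ * A = 1

/-- A finite Coxeter group: a finite subgroup of `GL(ℓ,ℂ)`, conjugate to a subgroup of
the real orthogonal group, generated by reflections. -/
structure IsFiniteCoxeterGroup (ℓ : ℕ) (W : Subgroup (GL (Fin ℓ) ℂ)) : Prop where
  finite : Set.Finite (W : Set (GL (Fin ℓ) ℂ))
  conjOrth : ∃ g : GL (Fin ℓ) ℂ, ∀ w ∈ W,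
    IsRealOrthogonal ℓ (↑(g * w * g⁻¹) : Matrix (Fin ℓ) (Fin ℓ) ℂ)
  genByReflections : Subgroup.closure {w : GL (Fin ℓ) ℂ | w ∈ W ∧ IsReflection ℓ w} = W

/-- The representation of `W` on `ℂ^ℓ` is irreducible: the only invariant subspaces
are `0` and `ℂ^ℓ`. -/
def IsIrreducibleRep (ℓ : ℕ) (W : Subgroup (GL (Fin ℓ) ℂ)) : Prop :=
  ∀ U : Submodule ℂ (Fin ℓ → ℂ),
    (∀ w ∈ W, ∀ v ∈ U, (↑w : Matrix (Fin ℓ) (Fin ℓ) ℂ).mulVec v ∈ U) → U = ⊥ ∨ U = ⊤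

/-- `p₁,…,p_ℓ` are basic invariants of `W` of degrees `d₁,…,d_ℓ`: homogeneous,
invariant, algebraically independent, generating the ring of invariants. -/
structure AreBasicInvariants (ℓ : ℕ) (W : Subgroup (GL (Fin ℓ) ℂ))
    (p : Fin ℓ → MvPolynomial (Fin ℓ) ℂ) (d : Fin ℓ → ℕ) : Prop where
  homogeneous : ∀ i, (p i).IsHomogeneous (d i)
  invariant : ∀ i, IsInvariantPoly ℓ W (p i)
  algInd : AlgebraicIndependent ℂ p
  generate : ∀ f, IsInvariantPoly ℓ W f ↔ f ∈ Algebra.adjoin ℂ (Set.range p)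

/-- The Jacobian matrix `J = (∂pᵢ/∂xⱼ)`. -/
noncomputable def jacobian (ℓ : ℕ) (p : Fin ℓ → MvPolynomial (Fin ℓ) ℂ) :
    Matrix (Fin ℓ) (Fin ℓ) (MvPolynomial (Fin ℓ) ℂ) :=
  Matrix.of fun i j => pderiv j (p i)

/-- The zero set of a polynomial. -/
def zeroSet (ℓ : ℕ) (f : MvPolynomial (Fin ℓ) ℂ) : Set (Fin ℓ → ℂ) :=
  {v | eval v f = 0}

/-- The reflection arrangement of `W`: the set of fixed hyperplanes of reflections of `W`. -/
def ReflArrangement (ℓ : ℕ) (W : Subgroup (GL (Fin ℓ) ℂ)) : Set (Set (Fin ℓ → ℂ)) :=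
  {H | ∃ w ∈ W, IsReflection ℓ w ∧
    H = {v | (↑w : Matrix (Fin ℓ) (Fin ℓ) ℂ).mulVec v = v}}

/-- `α` is a set of linear forms containing exactly one defining linear form for each
reflecting hyperplane of `W`; then `Δ = ∏_{f ∈ α} f`. -/
structure AreDefiningForms (ℓ : ℕ) (W : Subgroup (GL (Fin ℓ) ℂ))
    (α : Finset (MvPolynomial (Fin ℓ) ℂ)) : Prop where
  linear : ∀ f ∈ α, f.IsHomogeneous 1
  injOn : Set.InjOn (zeroSet ℓ) ↑α
  onto : zeroSet ℓ '' ↑α = ReflArrangement ℓ W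

/-! Differentiating `Δ² = a(p)` by the chain rule gives `Jᵀ · (∂_{p_k}(Δ²))_k = ∇(Δ²) = det Jᵀ · 2∇Δ`,
so by Cramer's rule `(∂_{p_k}(Δ²))_k = adj(Jᵀ) · 2∇Δ` (as `Δ ≠ 0`). The expression to be shown
divisible by `Δ` is then a combination of `2 × 2` minors of `adj(Jᵀ)`, and by Jacobi's theorem on
complementary minors each such minor is `det Jᵀ = Δ` times a minor of `Jᵀ`. -/

namespace Matrix

variable {R N : Type*} [CommRing R] [Fintype N] [DecidableEq N]

theorem det_updateRow_updateRow_one {k j : N} (hkj : k ≠ j) (u w : N → R) :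
    (((1 : Matrix N N R).updateRow k u).updateRow j w).det = u k * w j - u j * w k := by
  let U : Matrix N (Fin 2) R := of fun r c => if r = ![k, j] c then 1 else 0
  let V : Matrix (Fin 2) N R := of ![u - Pi.single k 1, w - Pi.single j 1]
  have hUV : ((1 : Matrix N N R).updateRow k u).updateRow j w = 1 + U * V := by
    ext r s
    rcases eq_or_ne r j with rfl | hrj
    · simp [U, V, mul_apply, Fin.sum_univ_two, hkj.symm, one_apply, Pi.single_apply, eq_comm]
    rcases eq_or_ne r k with rfl | hrk
    · simp [U, V, mul_apply, Fin.sum_univ_two, hrj, one_apply, Pi.single_apply, eq_comm]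
    · simp [U, V, mul_apply, Fin.sum_univ_two, hrj, hrk]
  have hVU : ∀ a b, (V * U) a b = V a (![k, j] b) := by
    intro a b
    simp [U, mul_apply]
  rw [hUV, det_one_add_mul_comm, det_fin_two]
  simp only [add_apply, one_apply_eq, one_apply_ne zero_ne_one, one_apply_ne one_ne_zero, hVU]
  simp [V, hkj, hkj.symm]

theorem adjugate_row_vecMul_self (A : Matrix N N R) (i : N) :
    A.adjugate i ᵥ* A = A.det • Pi.single i 1 := by
  ext s
  rw [← mul_apply_eq_vecMul, adjugate_mul, smul_apply, one_eq_pi_single, Pi.smul_apply]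

theorem adjugate_mul_adjugate_sub_eq {A : Matrix N N R} (hA : IsLeftRegular A.det) {k j : N}
    (hkj : k ≠ j) (i l : N) :
    A.adjugate i k * A.adjugate l j - A.adjugate i j * A.adjugate l k
      = A.det * ((A.updateRow k (Pi.single i 1)).updateRow j (Pi.single l 1)).det := by
  set Y := ((1 : Matrix N N R).updateRow k (A.adjugate i)).updateRow j (A.adjugate l)
  have hYA : Y * A
      = (A.updateRow k (A.det • Pi.single i 1)).updateRow j (A.det • Pi.single l 1) := by
    rw [updateRow_mul, updateRow_mul, Matrix.one_mul, adjugate_row_vecMul_self,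
      adjugate_row_vecMul_self]
  have hdet : A.det * Y.det
      = A.det * (A.det * ((A.updateRow k (Pi.single i 1)).updateRow j (Pi.single l 1)).det) := by
    rw [mul_comm, ← det_mul, hYA, det_updateRow_smul, updateRow_comm _ hkj, det_updateRow_smul,
      updateRow_comm _ hkj.symm]
  rw [← det_updateRow_updateRow_one hkj]
  exact hA hdet

theorem det_dvd_adjugate_mul_adjugate_sub {A : Matrix N N R} (hA : IsLeftRegular A.det)
    (i l k j : N) : A.det ∣ A.adjugate i k * A.adjugate l j - A.adjugate i j * A.adjugate l k := by
  rcases eq_or_ne k j with rfl | hkj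
  · simp
  · exact Dvd.intro _ (adjugate_mul_adjugate_sub_eq hA hkj i l).symm

theorem eq_adjugate_mulVec_of_mulVec_eq_det_smul {A : Matrix N N R} (hA : IsLeftRegular A.det)
    {x y : N → R} (hxy : A *ᵥ x = A.det • y) : x = A.adjugate *ᵥ y := by
  have h : A.det • x = A.det • (A.adjugate *ᵥ y) := by
    rw [← one_mulVec x, ← smul_mulVec, ← adjugate_mul, ← mulVec_mulVec, hxy, mulVec_smul]
  funext t
  exact hA (congrFun h t)

theorem det_dvd_of_mulVec_eq_det_smul {A : Matrix N N R} (hA : IsLeftRegular A.det)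
    {x y : N → R} (hxy : A *ᵥ x = A.det • y) (i l j : N) :
    A.det ∣ x i * A.adjugate l j - x l * A.adjugate i j := by
  have hsum : x i * A.adjugate l j - x l * A.adjugate i j
      = ∑ t, y t * (A.adjugate i t * A.adjugate l j - A.adjugate i j * A.adjugate l t) := by
    simp only [eq_adjugate_mulVec_of_mulVec_eq_det_smul hA hxy, mulVec, dotProduct,
      Finset.sum_mul, ← Finset.sum_sub_distrib]
    exact Finset.sum_congr rfl fun t _ => by ring
  rw [hsum]
  exact Finset.dvd_sum fun t _ => (det_dvd_adjugate_mul_adjugate_sub hA i l t j).mul_left _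

end Matrix

namespace MvPolynomial

variable {R σ τ : Type*} [CommRing R] [Fintype σ]

theorem pderiv_aeval (p : σ → MvPolynomial τ R) (j : τ) (a : MvPolynomial σ R) :
    pderiv j (aeval p a) = ∑ k, aeval p (pderiv k a) * pderiv j (p k) := by
  classical
  induction a using MvPolynomial.induction_on with
  | C c => simp
  | add f g hf hg => simp only [map_add, hf, hg, add_mul, Finset.sum_add_distrib]
  | mul_X f s hf =>
    have hterm : ∀ k, aeval p (pderiv k (f * X s)) * pderiv j (p k)
        = aeval p (pderiv k f) * pderiv j (p k) * p s
          + aeval p f * (if s = k then pderiv j (p k) else 0) := by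
      intro k
      rw [pderiv_mul, pderiv_X, map_add, map_mul, map_mul, aeval_X]
      by_cases h : s = k <;> simp [h] <;> ring
    rw [map_mul, aeval_X, pderiv_mul, hf, Finset.sum_congr rfl fun k _ => hterm k,
      Finset.sum_add_distrib, ← Finset.sum_mul, ← Finset.mul_sum, Finset.sum_ite_eq,
      if_pos (Finset.mem_univ s)]

end MvPolynomial

theorem univ_notMem_reflArrangement (ℓ : ℕ) (W : Subgroup (GL (Fin ℓ) ℂ)) :
    Set.univ ∉ ReflArrangement ℓ W := by
  rintro ⟨w, -, hw, hfix⟩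
  refine hw.1 (Units.ext (ext_iff_mulVec.2 fun v => ?_))
  have hv : v ∈ {v | (↑w : Matrix (Fin ℓ) (Fin ℓ) ℂ) *ᵥ v = v} := hfix ▸ Set.mem_univ v
  simpa using hv

theorem AreDefiningForms.prod_ne_zero {ℓ : ℕ} {W : Subgroup (GL (Fin ℓ) ℂ)}
    {α : Finset (MvPolynomial (Fin ℓ) ℂ)} (hα : AreDefiningForms ℓ W α) : ∏ f ∈ α, f ≠ 0 := by
  refine Finset.prod_ne_zero_iff.2 fun f hf hf0 => univ_notMem_reflArrangement ℓ W ?_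
  rw [← hα.onto]
  exact ⟨f, hf, by simp [zeroSet, hf0]⟩

theorem jacobian_transpose_mulVec (ℓ : ℕ) (p : Fin ℓ → MvPolynomial (Fin ℓ) ℂ)
    (a : MvPolynomial (Fin ℓ) ℂ) :
    (jacobian ℓ p)ᵀ *ᵥ (fun k => aeval p (pderiv k a)) = fun j => pderiv j (aeval p a) := by
  ext j
  simp only [pderiv_aeval, mulVec, dotProduct, transpose_apply, jacobian, of_apply, mul_comm]

theorem statement4_general (n : ℕ) (W : Subgroup (GL (Fin (n + 1)) ℂ))
    (p : Fin (n + 1) → MvPolynomial (Fin (n + 1)) ℂ)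
    (α : Finset (MvPolynomial (Fin (n + 1)) ℂ)) (hα : AreDefiningForms (n + 1) W α)
    (hdet : (jacobian (n + 1) p).det = ∏ f ∈ α, f)
    (a : MvPolynomial (Fin (n + 1)) ℂ)
    (ha : aeval p a = (∏ f ∈ α, f) ^ 2) :
    ∀ i j : Fin (n + 1),
      aeval p (pderiv i a) * (jacobian (n + 1) p)ᵀ.adjugate (Fin.last n) j
        - aeval p (pderiv (Fin.last n) a) * (jacobian (n + 1) p)ᵀ.adjugate i j
        ∈ Ideal.span {∏ f ∈ α, f} := by
  intro i j
  set Δ := ∏ f ∈ α, f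
  have hdetT : (jacobian (n + 1) p)ᵀ.det = Δ := by rw [det_transpose, hdet]
  have hreg : IsLeftRegular (jacobian (n + 1) p)ᵀ.det :=
    hdetT ▸ (IsRegular.of_ne_zero hα.prod_ne_zero).left
  have hgrad : (jacobian (n + 1) p)ᵀ *ᵥ (fun k => aeval p (pderiv k a))
      = (jacobian (n + 1) p)ᵀ.det • fun k => 2 * pderiv k Δ := by
    rw [jacobian_transpose_mulVec, ha, hdetT]
    funext k
    rw [pderiv_pow, Pi.smul_apply, smul_eq_mul]
    ring
  rw [Ideal.mem_span_singleton, ← hdetT]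
  exact det_dvd_of_mulVec_eq_det_smul hreg hgrad i (Fin.last n) j

/-- Proposition 12 of the paper.  With `Δ = det J` the product of the
defining linear forms of the arrangement and `Δ² = a(p₁,…,p_ℓ)`, one has
`∂_{p_i}(Δ²)·m^ℓ_j − ∂_{p_ℓ}(Δ²)·m^i_j ∈ (Δ)` where `m^i_j` are the entries of the
adjugate of `Jᵗ`. -/
theorem statement4 (n : ℕ) (W : Subgroup (GL (Fin (n + 1)) ℂ))
    (hW : IsFiniteCoxeterGroup (n + 1) W) (hirr : IsIrreducibleRep (n + 1) W)
    (p : Fin (n + 1) → MvPolynomial (Fin (n + 1)) ℂ) (d : Fin (n + 1) → ℕ)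
    (hp : AreBasicInvariants (n + 1) W p d) (hd : Monotone d)
    (α : Finset (MvPolynomial (Fin (n + 1)) ℂ)) (hα : AreDefiningForms (n + 1) W α)
    (hdet : (jacobian (n + 1) p).det = ∏ f ∈ α, f)
    (a : MvPolynomial (Fin (n + 1)) ℂ)
    (ha : aeval p a = (∏ f ∈ α, f) ^ 2) :
    ∀ i j : Fin (n + 1),
      aeval p (pderiv i a) * (jacobian (n + 1) p)ᵀ.adjugate (Fin.last n) j
        - aeval p (pderiv (Fin.last n) a) * (jacobian (n + 1) p)ᵀ.adjugate i j
        ∈ Ideal.span {∏ f ∈ α, f} :=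
  statement4_general n W p α hα hdet a ha
end

section
/- Let S = ℂ[x₁,…,x_n] and let A be an n×n matrix over S with Δ := det A ≠ 0. Suppose the first column of A is an Euler-like field for Δ and the remaining columns annihilate Δ: Σ_{i=1}^n A_{i,1}·(∂Δ/∂x_i) = d·Δ for some nonzero scalar d ∈ ℂ, and Σ_{i=1}^n A_{i,k}·(∂Δ/∂x_i) = 0 for all k ≥ 2. Then for every j = 1,…,n one has ∂Δ/∂x_j = d·(adj A)_{1,j}, where adj A is the adjugate matrix of A. -/
/-! Both the gradient of `Δ = det A` and `d` times the first row of `adj A` multiply `A`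
to the row vector `(d·Δ, 0, …, 0)`; since `det A ≠ 0` in a domain, a row vector is determined
by its product with `A`. -/

open MvPolynomial Matrix

section

variable {n R : Type*} [Fintype n] [DecidableEq n] [CommRing R]

theorem Matrix.adjugate_row_vecMul (A : Matrix n n R) (i : n) :
    adjugate A i ᵥ* A = Pi.single i A.det := by
  ext k
  rw [← mul_apply_eq_vecMul, adjugate_mul, smul_apply, one_apply, Pi.single_apply]
  simp [eq_comm]

theorem Matrix.eq_smul_adjugate_row_of_vecMul_eq_single [IsDomain R] {A : Matrix n n R}
    (hA : A.det ≠ 0) {v : n → R} {i : n} {c : R} (hv : v ᵥ* A = Pi.single i (c * A.det)) :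
    v = c • adjugate A i := by
  by_contra hne
  refine hA (exists_vecMul_eq_zero_iff.mp ⟨v - c • adjugate A i, sub_ne_zero.mpr hne, ?_⟩)
  rw [sub_vecMul, smul_vecMul, adjugate_row_vecMul, hv, ← smul_eq_mul, ← Pi.single_smul', sub_self]

end

theorem statement7_general (n : ℕ) (hn : 1 ≤ n)
    (A : Matrix (Fin n) (Fin n) (MvPolynomial (Fin n) ℂ))
    (hΔ : A.det ≠ 0) (d : ℂ)
    (hEuler : ∑ i : Fin n, A i ⟨0, hn⟩ * pderiv i A.det = C d * A.det)
    (hAnn : ∀ k : Fin n, k ≠ ⟨0, hn⟩ → ∑ i : Fin n, A i k * pderiv i A.det = 0) :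
    ∀ j : Fin n, pderiv j A.det = C d * adjugate A ⟨0, hn⟩ j := by
  have hgrad : (fun i => pderiv i A.det) ᵥ* A = Pi.single ⟨0, hn⟩ (C d * A.det) := by
    ext k
    simp only [vecMul, dotProduct, mul_comm (pderiv _ A.det)]
    rcases eq_or_ne k ⟨0, hn⟩ with rfl | hk
    · rw [hEuler, Pi.single_eq_same]
    · rw [hAnn k hk, Pi.single_eq_of_ne hk]
  exact congrFun (eq_smul_adjugate_row_of_vecMul_eq_single hΔ hgrad)

/-- identity (157) of the paper.  If the first column of `A` is an
Euler-like field for `Δ = det A` (`δ₁(Δ) = d·Δ`, `d ∈ ℂˣ`) and the remaining columns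
annihilate `Δ`, then `∂Δ/∂xⱼ = d·(adj A)_{1,j}` for every `j`. -/
theorem statement7 (n : ℕ) (hn : 1 ≤ n)
    (A : Matrix (Fin n) (Fin n) (MvPolynomial (Fin n) ℂ))
    (hΔ : A.det ≠ 0) (d : ℂ) (hd : d ≠ 0)
    (hEuler : ∑ i : Fin n, A i ⟨0, hn⟩ * pderiv i A.det = C d * A.det)
    (hAnn : ∀ k : Fin n, k ≠ ⟨0, hn⟩ → ∑ i : Fin n, A i k * pderiv i A.det = 0) :
    ∀ j : Fin n, pderiv j A.det = C d * adjugate A ⟨0, hn⟩ j :=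
  statement7_general n hn A hΔ d hEuler hAnn
end

section
/- Let ℓ ≥ 4 and S = ℂ[x₁,…,x_ℓ]. Define the power sums q_k := Σ_{i=1}^ℓ x_i^{2k} for k = 1,…,ℓ−1, the product e := x₁⋯x_ℓ, and let F ⊆ S be the ideal generated by q₁,…,q_{ℓ−1} and e (the ideal generated by the basic invariants of the Coxeter group of type D_ℓ). Then there exists a nonzero scalar c ∈ ℂˣ such that Σ_{j=1}^ℓ ∏_{k≠j} x_k² − c·q_{ℓ−1} ∈ F². -/
/-!
Substituting `yᵢ = xᵢ²` (i.e. applying `expand 2`) turns `∑ⱼ ∏_{k≠j} x_k²` into `e_{ℓ-1}(y)` and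
`q_k` into the power sum `p_k(y)`. Newton's identity
`p_k = (-1)^(k+1) k e_k - ∑_{0<i<k} (-1)^i e_i p_{k-i}` writes `e_k` as a multiple of `p_k` plus a
sum of products `e_i p_{k-i}` with `0 < i, k - i < k`. Newton's identity also puts every such `e_i`
in the ideal `(p_1, …, p_{k-1})`, so these products lie in its square; take `k = ℓ - 1`.
-/

open Finset MvPolynomial

theorem Finset.powersetCard_card_sub_one_univ {α : Type*} [Fintype α] [DecidableEq α]
    [Nonempty α] :
    powersetCard (Fintype.card α - 1) (univ : Finset α) =
      univ.map ⟨fun j : α => ({j}ᶜ : Finset α), compl_injective.comp singleton_injective⟩ := by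
  ext A
  simp only [mem_powersetCard, subset_univ, true_and, mem_map, mem_univ,
    Function.Embedding.coeFn_mk]
  constructor
  · intro hA
    have hcard : #Aᶜ = 1 := by
      have := Fintype.card_pos (α := α)
      rw [card_compl]; omega
    obtain ⟨j, hj⟩ := card_eq_one.mp hcard
    exact ⟨j, by rw [← hj, compl_compl]⟩
  · rintro ⟨j, rfl⟩
    rw [card_compl, card_singleton]

namespace MvPolynomial

variable (σ R : Type*) [Fintype σ]

theorem esymm_card_sub_one [CommSemiring R] [DecidableEq σ] [Nonempty σ] :
    esymm σ R (Fintype.card σ - 1) = ∑ j, ∏ k ∈ univ.erase j, X k := by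
  simp [esymm, powersetCard_card_sub_one_univ, compl_singleton]

theorem expand_psum [CommSemiring R] (p n : ℕ) :
    expand p (psum σ R n) = ∑ i, X i ^ (p * n) := by
  simp [psum, pow_mul]

noncomputable def psumIdeal [CommSemiring R] (m : ℕ) : Ideal (MvPolynomial σ R) :=
  Ideal.span (Set.range fun j : Fin m => psum σ R (j + 1))

variable {σ R}

theorem psum_mem_psumIdeal [CommSemiring R] {m j : ℕ} (hj : 0 < j) (hjm : j ≤ m) :
    psum σ R j ∈ psumIdeal σ R m :=
  Ideal.subset_span ⟨⟨j - 1, by omega⟩, by simp only [Nat.sub_add_cancel hj]⟩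

theorem psumIdeal_mono [CommSemiring R] {m n : ℕ} (h : m ≤ n) :
    psumIdeal σ R m ≤ psumIdeal σ R n :=
  Ideal.span_le.mpr <| Set.range_subset_iff.mpr fun j =>
    psum_mem_psumIdeal j.succ_pos (by omega)

theorem map_expand_psumIdeal [CommSemiring R] (p m : ℕ) :
    (psumIdeal σ R m).map (expand p) =
      Ideal.span (Set.range fun j : Fin m => ∑ i, X i ^ (p * (j + 1))) := by
  rw [psumIdeal, Ideal.map_span, ← Set.range_comp]
  simp only [Function.comp_def, expand_psum]

variable [Field R] [CharZero R]

theorem esymm_mem_psumIdeal {m k : ℕ} (hk : 0 < k) (hkm : k ≤ m) :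
    esymm σ R k ∈ psumIdeal σ R m := by
  have hmul : (k : MvPolynomial σ R) * esymm σ R k ∈ psumIdeal σ R m := by
    rw [mul_esymm_eq_sum]
    refine Ideal.mul_mem_left _ _ (Ideal.sum_mem _ fun a ha => Ideal.mul_mem_left _ _ ?_)
    rw [mem_filter, HasAntidiagonal.mem_antidiagonal] at ha
    exact psum_mem_psumIdeal (by omega) (by omega)
  have hk' : (k : R) ≠ 0 := Nat.cast_ne_zero.mpr hk.ne'
  have hinv : C (k : R)⁻¹ * (k : MvPolynomial σ R) = 1 := by
    rw [← map_natCast (C : R →+* MvPolynomial σ R), ← C_mul, inv_mul_cancel₀ hk', C_1]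
  simpa [← mul_assoc, hinv] using Ideal.mul_mem_left _ (C (k : R)⁻¹) hmul

theorem esymm_sub_C_mul_psum_mem_psumIdeal_sq {k : ℕ} (hk : 0 < k) :
    esymm σ R k - C ((-1 : R) ^ (k + 1) / k) * psum σ R k ∈ psumIdeal σ R (k - 1) ^ 2 := by
  set T := ∑ a ∈ antidiagonal k with a.1 ∈ Set.Ioo 0 k,
    (-1) ^ a.1 * esymm σ R a.1 * psum σ R a.2
  have hT : T ∈ psumIdeal σ R (k - 1) ^ 2 := by
    refine Ideal.sum_mem _ fun a ha => ?_
    rw [mem_filter, HasAntidiagonal.mem_antidiagonal, Set.mem_Ioo] at ha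
    rw [mul_assoc, sq]
    exact Ideal.mul_mem_left _ _ (Ideal.mul_mem_mul (esymm_mem_psumIdeal (by omega) (by omega))
      (psum_mem_psumIdeal (by omega) (by omega)))
  have hk' : (k : R) ≠ 0 := Nat.cast_ne_zero.mpr hk.ne'
  have hunit : C ((-1 : R) ^ (k + 1) / k) * ((-1) ^ (k + 1) * (k : MvPolynomial σ R)) = 1 := by
    rw [← map_natCast (C : R →+* MvPolynomial σ R), ← C_1, ← C_neg, ← C_pow, ← C_mul, ← C_mul,
      div_mul_eq_mul_div, ← mul_assoc, ← pow_add, Even.neg_one_pow ⟨_, rfl⟩, one_mul,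
      div_self hk']
  have hnewton := psum_eq_mul_esymm_sub_sum σ R k hk
  have hsplit : esymm σ R k - C ((-1 : R) ^ (k + 1) / k) * psum σ R k =
      C ((-1 : R) ^ (k + 1) / k) * T := by
    linear_combination (-C ((-1 : R) ^ (k + 1) / k)) * hnewton - esymm σ R k * hunit
  rw [hsplit]
  exact Ideal.mul_mem_left _ _ hT

end MvPolynomial

/-- the claim `p̂_{ℓ−1} ≡ c·p_{ℓ−1} mod F²` in the proof of
Theorem 221 of the paper, type `D_ℓ`.  With `q_k = ∑ xᵢ^{2k}` (`k = 1,…,ℓ−1`),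
`e = x₁⋯x_ℓ` and `F = (q₁,…,q_{ℓ−1}, e)`, there is `c ≠ 0` with
`∑ⱼ ∏_{k≠j} x_k² − c·q_{ℓ−1} ∈ F²`. -/
theorem statement17 (ℓ : ℕ) (h4 : 4 ≤ ℓ) :
    ∃ c : ℂ, c ≠ 0 ∧
      (∑ j : Fin ℓ, ∏ k ∈ Finset.univ.erase j, (X k : MvPolynomial (Fin ℓ) ℂ) ^ 2)
          - C c * (∑ i : Fin ℓ, X i ^ (2 * (ℓ - 1)))
        ∈ (Ideal.span
            ((Set.range fun k : Fin (ℓ - 1) =>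
                (∑ i : Fin ℓ, X i ^ (2 * ((k : ℕ) + 1)) : MvPolynomial (Fin ℓ) ℂ))
              ∪ {∏ i : Fin ℓ, X i})) ^ 2 := by
  have hℓ : 0 < ℓ - 1 := by omega
  have : Nonempty (Fin ℓ) := ⟨⟨0, by omega⟩⟩
  have hesymm : esymm (Fin ℓ) ℂ (ℓ - 1) = ∑ j, ∏ k ∈ univ.erase j, X k := by
    simpa only [Fintype.card_fin] using esymm_card_sub_one (Fin ℓ) ℂ
  have hnewton := Ideal.pow_right_mono (psumIdeal_mono (n := ℓ - 1) (by omega)) 2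
    (esymm_sub_C_mul_psum_mem_psumIdeal_sq (σ := Fin ℓ) (R := ℂ) hℓ)
  refine ⟨(-1) ^ (ℓ - 1 + 1) / (ℓ - 1 : ℕ),
    div_ne_zero (pow_ne_zero _ (neg_ne_zero.mpr one_ne_zero)) (Nat.cast_ne_zero.mpr hℓ.ne'), ?_⟩
  have hexpand := Ideal.mem_map_of_mem (expand 2) hnewton
  rw [Ideal.map_pow, map_expand_psumIdeal, map_sub, map_mul, hesymm, expand_psum] at hexpand
  refine Ideal.pow_right_mono (Ideal.span_mono Set.subset_union_left) 2 ?_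
  simpa using hexpand
end
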